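/- arXiv:2407.02372 — 6 statements merged into one kernel-verified Lean document; each statement's English description precedes it below -/
import Mathlib

section
/- For all nonnegative integers a and b, a! · b! ≥ (⌊(a+b)/2⌋!)². -/
/-!
Since `(a + b)! = C(a + b, a) · a! · b!` and the central binomial coefficient `C(n, ⌊n/2⌋)`
is the largest in its row, the product `a! · b!` with `a + b = n` is smallest at the balanced split
`⌊n/2⌋! · ⌈n/2⌉!`, which in turn is at least `(⌊n/2⌋!)²`.
-/

open Nat

theorem Nat.factorial_mul_factorial_le_of_choose_le {a b c d : ℕ} (hsum : c + d = a + b)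
    (hchoose : (a + b).choose b ≤ (c + d).choose d) : c ! * d ! ≤ a ! * b ! := by
  have hpos : 0 < (a + b).choose b := Nat.choose_pos (Nat.le_add_left b a)
  refine Nat.le_of_mul_le_mul_left ?_ hpos
  calc (a + b).choose b * (c ! * d !) ≤ (c + d).choose d * (c ! * d !) :=
        Nat.mul_le_mul_right _ hchoose
    _ = (c + d)! := by rw [← Nat.mul_assoc, Nat.add_choose_mul_factorial_mul_factorial]
    _ = (a + b).choose b * (a ! * b !) := by
        rw [hsum, ← Nat.mul_assoc, Nat.add_choose_mul_factorial_mul_factorial]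

theorem Nat.factorial_half_mul_factorial_sub_half_le (a b : ℕ) :
    ((a + b) / 2)! * (a + b - (a + b) / 2)! ≤ a ! * b ! := by
  have hsum : (a + b) / 2 + (a + b - (a + b) / 2) = a + b := by omega
  refine Nat.factorial_mul_factorial_le_of_choose_le hsum ?_
  rw [hsum, Nat.choose_symm (Nat.div_le_self _ 2)]
  exact Nat.choose_le_middle b (a + b)

theorem factorial_mul_factorial_ge_sq_half_factorial (a b : ℕ) :
    (Nat.factorial ((a + b) / 2)) ^ 2 ≤ Nat.factorial a * Nat.factorial b := by
  calc ((a + b) / 2)! ^ 2 = ((a + b) / 2)! * ((a + b) / 2)! := sq _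
    _ ≤ ((a + b) / 2)! * (a + b - (a + b) / 2)! :=
        Nat.mul_le_mul_left _ (Nat.factorial_le (by omega))
    _ ≤ a ! * b ! := Nat.factorial_half_mul_factorial_sub_half_le a b
end

section
/- Let n ≥ 1 and let a, b ∈ ℝⁿ with all entries a_i, b_j ∈ (0,1). Then the determinant of the matrix with entries 1/(1 + a_i b_j) equals (∏_{1≤i<j≤n} (a_j - a_i)(b_i - b_j)) / (∏_{i,j∈[n]} (1 + a_i b_j)). -/
/-!
Taking the first row and column of `C = (1 / (1 + aᵢ bⱼ))` as pivot, the Schur complement has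
entries `(aᵢ - a₀) (b₀ - bⱼ) / ((1 + aᵢ b₀) (1 + a₀ bⱼ) (1 + aᵢ bⱼ))`: it is the matrix of the same
shape for the remaining indices, rescaled by a diagonal matrix on each side. Induction on the size
then produces the product formula one pivot at a time.
-/

open Finset Matrix

theorem Matrix.det_succ_eq_mul_det_schur {K : Type*} [Field K] {n : ℕ}
    (A : Matrix (Fin (n + 1)) (Fin (n + 1)) K) (hA : A 0 0 ≠ 0) :
    A.det = A 0 0 *
      (of fun i j : Fin n => A i.succ j.succ - A i.succ 0 * A 0 j.succ / A 0 0).det := by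
  set B : Matrix (Fin (n + 1)) (Fin (n + 1)) K :=
    of fun i j => if i = 0 then A 0 j else A i j - A i 0 / A 0 0 * A 0 j
  have hAB : A.det = B.det := by
    refine det_eq_of_forall_row_eq_smul_add_const (fun i => if i = 0 then 0 else A i 0 / A 0 0) 0
      (if_pos rfl) fun i j => ?_
    by_cases hi : i = 0 <;> simp [B, hi]
  rw [hAB, det_succ_column_zero, Fin.sum_univ_succ]
  simp only [B, of_apply, Fin.succ_ne_zero, if_true, if_false, div_mul_cancel₀ _ hA, sub_self,
    mul_zero, zero_mul, sum_const_zero, add_zero, pow_zero, one_mul, Fin.val_zero]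
  congr 2
  ext i j
  simp [Fin.succ_ne_zero, mul_div_right_comm]

theorem Fin.prod_prod_Ioi_succ {M : Type*} [CommMonoid M] {n : ℕ}
    (f : Fin (n + 1) → Fin (n + 1) → M) :
    ∏ i, ∏ j ∈ Ioi i, f i j =
      (∏ j : Fin n, f 0 j.succ) * ∏ i : Fin n, ∏ j ∈ Ioi i, f i.succ j.succ := by
  simp only [Fin.prod_univ_succ, Fin.prod_Ioi_zero, Fin.prod_Ioi_succ]

theorem Fin.prod_prod_succ {M : Type*} [CommMonoid M] {n : ℕ}
    (f : Fin (n + 1) → Fin (n + 1) → M) :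
    ∏ i, ∏ j, f i j =
      f 0 0 * (∏ j : Fin n, f 0 j.succ) * (∏ i : Fin n, f i.succ 0) *
        ∏ i : Fin n, ∏ j : Fin n, f i.succ j.succ := by
  simp only [Fin.prod_univ_succ, prod_mul_distrib]
  ac_rfl

theorem one_div_one_add_mul_sub_schur {K : Type*} [Field K] {a a₀ b b₀ : K}
    (hab : 1 + a * b ≠ 0) (hab₀ : 1 + a * b₀ ≠ 0) (ha₀b : 1 + a₀ * b ≠ 0) :
    1 / (1 + a * b) - 1 / (1 + a * b₀) * (1 / (1 + a₀ * b)) / (1 / (1 + a₀ * b₀)) =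
      (a - a₀) / (1 + a * b₀) * ((b₀ - b) / (1 + a₀ * b) * (1 / (1 + a * b))) := by
  rw [div_div_eq_mul_div, div_one, eq_comm, ← sub_eq_zero]
  field_simp
  ring

theorem Matrix.det_one_div_one_add_mul_succ {K : Type*} [Field K] {n : ℕ}
    (a b : Fin (n + 1) → K) (h : ∀ i j, 1 + a i * b j ≠ 0) :
    (of fun i j => 1 / (1 + a i * b j)).det =
      1 / (1 + a 0 * b 0) * ((∏ i : Fin n, (a i.succ - a 0) / (1 + a i.succ * b 0)) *
        ((∏ j : Fin n, (b 0 - b j.succ) / (1 + a 0 * b j.succ)) *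
          (of fun i j : Fin n => 1 / (1 + a i.succ * b j.succ)).det)) := by
  rw [det_succ_eq_mul_det_schur _ (one_div_ne_zero (h 0 0)), ← det_mul_row, ← det_mul_column]
  congr 2
  ext i j
  exact one_div_one_add_mul_sub_schur (h i.succ j.succ) (h i.succ 0) (h 0 j.succ)

theorem Matrix.det_one_div_one_add_mul {K : Type*} [Field K] {n : ℕ}
    (a b : Fin n → K) (h : ∀ i j, 1 + a i * b j ≠ 0) :
    (of fun i j => 1 / (1 + a i * b j)).det =
      (∏ i, ∏ j ∈ Ioi i, (a j - a i) * (b i - b j)) / ∏ i, ∏ j, (1 + a i * b j) := by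
  induction n with
  | zero => simp
  | succ n ih =>
    have hprod : ∏ i : Fin n, ∏ j : Fin n, (1 + a i.succ * b j.succ) ≠ 0 :=
      prod_ne_zero_iff.2 fun i _ => prod_ne_zero_iff.2 fun j _ => h i.succ j.succ
    have hcol : ∏ i : Fin n, (1 + a i.succ * b 0) ≠ 0 := prod_ne_zero_iff.2 fun i _ => h i.succ 0
    have hrow : ∏ j : Fin n, (1 + a 0 * b j.succ) ≠ 0 := prod_ne_zero_iff.2 fun j _ => h 0 j.succ
    have hpivot := h 0 0
    rw [det_one_div_one_add_mul_succ a b h, ih _ _ fun i j => h i.succ j.succ,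
      Fin.prod_prod_Ioi_succ, Fin.prod_prod_succ, prod_mul_distrib, prod_div_distrib,
      prod_div_distrib]
    field_simp

theorem scaled_cauchy_determinant_general (n : ℕ) (a b : Fin n → ℝ)
    (ha : ∀ i, a i ∈ Set.Ioo (0 : ℝ) 1) (hb : ∀ j, b j ∈ Set.Ioo (0 : ℝ) 1) :
    Matrix.det (Matrix.of fun i j : Fin n => 1 / (1 + a i * b j)) =
      (∏ i : Fin n, ∏ j ∈ Finset.Ioi i, (a j - a i) * (b i - b j)) /
        ∏ i : Fin n, ∏ j : Fin n, (1 + a i * b j) :=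
  det_one_div_one_add_mul a b fun i j => (add_pos one_pos (mul_pos (ha i).1 (hb j).1)).ne'

theorem scaled_cauchy_determinant (n : ℕ) (hn : 1 ≤ n) (a b : Fin n → ℝ)
    (ha : ∀ i, a i ∈ Set.Ioo (0 : ℝ) 1) (hb : ∀ j, b j ∈ Set.Ioo (0 : ℝ) 1) :
    Matrix.det (Matrix.of fun i j : Fin n => 1 / (1 + a i * b j)) =
      (∏ i : Fin n, ∏ j ∈ Finset.Ioi i, (a j - a i) * (b i - b j)) /
        ∏ i : Fin n, ∏ j : Fin n, (1 + a i * b j) :=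
  scaled_cauchy_determinant_general n a b ha hb
end

section
/- Let n ≥ 2, let a, b ∈ ℝⁿ with entries in (0,1) and pairwise distinct entries in a and in b, and fix s, t ∈ [n]. Then the absolute value of the ratio det(M)/det(M') equals |∏_{i≠s}(a_i - a_s) · ∏_{j≠t}(b_j - b_t)| / |∏_{i∈[n]}(1 + a_i b_t) · ∏_{j≠t}(1 + a_s b_j)|, where M[i,j] = 1/(1 + a_i b_j) is the n×n matrix and M' is its (s,t)-minor obtained by deleting row s and column t. -/
/-!
Pivoting on the entry `M s t` (Chiò condensation) writes `det M` as `± M s t` times the determinant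
of the Schur complement `M i j - M i t * M s j / M s t` (`i ≠ s`, `j ≠ t`). For `M i j = 1 / (1 + a i * b j)`
that complement is the minor `M'` with its rows scaled by `(a i - a s) / (1 + a i * b t)` and its columns
by `(b t - b j) / (1 + a s * b j)`, which gives `det M / det M'` in closed form. Applied recursively, the
same identity shows that `det M' ≠ 0` when the entries of `a` and of `b` are distinct.
-/

open Matrix Finset

theorem Fin.prod_univ_erase_eq_prod_succAbove {M : Type*} [CommMonoid M] {m : ℕ}
    (f : Fin (m + 1) → M) (x : Fin (m + 1)) :
    ∏ i ∈ univ.erase x, f i = ∏ i, f (x.succAbove i) := by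
  rw [Fin.univ_succAbove m x, erase_cons, prod_map, Fin.coe_succAboveEmb]

namespace Matrix

variable {K : Type*} [Field K]

theorem det_eq_pivot_mul_det_schur {m : ℕ} (A : Matrix (Fin (m + 1)) (Fin (m + 1)) K)
    (s t : Fin (m + 1)) (hst : A s t ≠ 0) :
    A.det = (-1) ^ (s + t : ℕ) * A s t * (of fun i j =>
      A (s.succAbove i) (t.succAbove j) - A (s.succAbove i) t * A s (t.succAbove j) / A s t).det := by
  set c : Fin (m + 1) → K := fun i => if i = s then 0 else A i t / A s t
  set B : Matrix (Fin (m + 1)) (Fin (m + 1)) K := of fun i j => A i j - c i * A s j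
  have hBs : ∀ j, B s j = A s j := fun j => by simp [B, c]
  have hAB : A.det = B.det :=
    det_eq_of_forall_row_eq_smul_add_const c s (if_pos rfl) fun i j => by
      rw [hBs]; simp [B]
  have hBcol : ∀ i ≠ s, B i t = 0 := fun i hi => by
    simp [B, c, hi, div_mul_cancel₀ _ hst]
  rw [hAB, det_succ_column B t, Fintype.sum_eq_single s fun i hi => by rw [hBcol i hi]; ring, hBs]
  congr 2
  ext i j
  simp [B, c, Fin.succAbove_ne]
  ring

section ScaledCauchy

variable {ι κ : Type*}

def scaledCauchy (a : ι → K) (b : κ → K) : Matrix ι κ K :=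
  of fun i j => 1 / (1 + a i * b j)

theorem scaledCauchy_sub_mul_div {a : ι → K} {b : κ → K} (h : ∀ i j, 1 + a i * b j ≠ 0)
    (i s : ι) (j t : κ) :
    scaledCauchy a b i j - scaledCauchy a b i t * scaledCauchy a b s j / scaledCauchy a b s t =
      (a i - a s) / (1 + a i * b t) * ((b t - b j) / (1 + a s * b j) * scaledCauchy a b i j) := by
  have hsj := h s j
  have hij := h i j
  have hit := h i t
  simp only [scaledCauchy, of_apply]
  -- `field_simp` normalizes `a s * b j` to `b j * a s` and would then not recognize `hsj`.
  rw [mul_comm (a s) (b j)] at hsj ⊢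
  field_simp
  ring

theorem det_scaledCauchy {m : ℕ} {a b : Fin (m + 1) → K} (h : ∀ i j, 1 + a i * b j ≠ 0)
    (s t : Fin (m + 1)) :
    (scaledCauchy a b).det = (-1) ^ (s + t : ℕ) *
      ((∏ i ∈ univ.erase s, (a i - a s)) * ∏ j ∈ univ.erase t, (b t - b j)) /
      ((∏ i, (1 + a i * b t)) * ∏ j ∈ univ.erase t, (1 + a s * b j)) *
      ((scaledCauchy a b).submatrix s.succAbove t.succAbove).det := by
  set M' := (scaledCauchy a b).submatrix s.succAbove t.succAbove
  have hschur : (of fun i j => scaledCauchy a b (s.succAbove i) (t.succAbove j) -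
      scaledCauchy a b (s.succAbove i) t * scaledCauchy a b s (t.succAbove j) /
        scaledCauchy a b s t) =
      of fun i j => (a (s.succAbove i) - a s) / (1 + a (s.succAbove i) * b t) *
        (of fun i j => (b t - b (t.succAbove j)) / (1 + a s * b (t.succAbove j)) * M' i j) i j := by
    ext i j
    exact scaledCauchy_sub_mul_div h _ _ _ _
  rw [det_eq_pivot_mul_det_schur _ s t (one_div_ne_zero (h s t)), hschur, det_mul_column,
    det_mul_row, ← mul_prod_erase univ _ (mem_univ s)]
  simp only [Fin.prod_univ_erase_eq_prod_succAbove, prod_div_distrib, scaledCauchy, of_apply]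
  field_simp

theorem det_scaledCauchy_ne_zero {m : ℕ} {a b : Fin m → K} (h : ∀ i j, 1 + a i * b j ≠ 0)
    (ha : Function.Injective a) (hb : Function.Injective b) : (scaledCauchy a b).det ≠ 0 := by
  induction m with
  | zero => simp
  | succ m ih =>
    rw [det_scaledCauchy h 0 0]
    refine mul_ne_zero (div_ne_zero (mul_ne_zero (pow_ne_zero _ (neg_ne_zero.2 one_ne_zero))
      (mul_ne_zero ?_ ?_)) (mul_ne_zero ?_ ?_))
      (ih (fun _ _ => h _ _) (ha.comp Fin.succAbove_right_injective)
        (hb.comp Fin.succAbove_right_injective))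
    · exact prod_ne_zero_iff.2 fun i hi => sub_ne_zero.2 (ha.ne (ne_of_mem_erase hi))
    · exact prod_ne_zero_iff.2 fun j hj => sub_ne_zero.2 (hb.ne (ne_of_mem_erase hj).symm)
    · exact prod_ne_zero_iff.2 fun i _ => h i 0
    · exact prod_ne_zero_iff.2 fun j _ => h 0 j

end ScaledCauchy

end Matrix

theorem scaled_cauchy_minor_ratio_general (n : ℕ) (a b : Fin (n + 1) → ℝ)
    (ha : ∀ i, a i ∈ Set.Ioo (0 : ℝ) 1) (hb : ∀ j, b j ∈ Set.Ioo (0 : ℝ) 1)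
    (hainj : Function.Injective a) (hbinj : Function.Injective b)
    (s t : Fin (n + 1)) :
    |Matrix.det (Matrix.of fun i j : Fin (n + 1) => 1 / (1 + a i * b j)) /
        Matrix.det ((Matrix.of fun i j : Fin (n + 1) => 1 / (1 + a i * b j)).submatrix
          s.succAbove t.succAbove)| =
      |(∏ i ∈ Finset.univ.erase s, (a i - a s)) * ∏ j ∈ Finset.univ.erase t, (b j - b t)| /
        |(∏ i : Fin (n + 1), (1 + a i * b t)) * ∏ j ∈ Finset.univ.erase t, (1 + a s * b j)| := by
  have h : ∀ i j, 1 + a i * b j ≠ 0 := fun i j =>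
    (add_pos one_pos (mul_pos (ha i).1 (hb j).1)).ne'
  have hminor : ((scaledCauchy a b).submatrix s.succAbove t.succAbove).det ≠ 0 :=
    det_scaledCauchy_ne_zero (fun _ _ => h _ _) (hainj.comp Fin.succAbove_right_injective)
      (hbinj.comp Fin.succAbove_right_injective)
  change |(scaledCauchy a b).det / ((scaledCauchy a b).submatrix s.succAbove t.succAbove).det| = _
  rw [det_scaledCauchy h s t, mul_div_cancel_right₀ _ hminor, mul_div_assoc, abs_mul,
    abs_neg_one_pow, one_mul, abs_div]
  congr 1
  simp only [abs_mul, abs_prod, abs_sub_comm (b t)]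

theorem scaled_cauchy_minor_ratio (n : ℕ) (hn : 1 ≤ n) (a b : Fin (n + 1) → ℝ)
    (ha : ∀ i, a i ∈ Set.Ioo (0 : ℝ) 1) (hb : ∀ j, b j ∈ Set.Ioo (0 : ℝ) 1)
    (hainj : Function.Injective a) (hbinj : Function.Injective b)
    (s t : Fin (n + 1)) :
    |Matrix.det (Matrix.of fun i j : Fin (n + 1) => 1 / (1 + a i * b j)) /
        Matrix.det ((Matrix.of fun i j : Fin (n + 1) => 1 / (1 + a i * b j)).submatrix
          s.succAbove t.succAbove)| =
      |(∏ i ∈ Finset.univ.erase s, (a i - a s)) * ∏ j ∈ Finset.univ.erase t, (b j - b t)| /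
        |(∏ i : Fin (n + 1), (1 + a i * b t)) * ∏ j ∈ Finset.univ.erase t, (1 + a s * b j)| :=
  scaled_cauchy_minor_ratio_general n a b ha hb hainj hbinj s t
end

section
/- Let m > 0, let λ ∈ ℕ^m be a weakly increasing integer tuple, and let u ∈ ℝ^m with 0 ≤ u_1 ≤ u_2 ≤ ... ≤ u_m. Then u^λ ≤ s_λ(u) ≤ (V(λ+δ)/V(δ)) · u^λ, where u^λ = ∏_i u_i^{λ_i}, δ = (0,1,...,m-1), and V(x) = ∏_{i<j}(x_j - x_i) is the Vandermonde determinant. -/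
/-!
In row `i` of a tableau every entry is at most `i` (columns strictly increase upwards), so for
nonnegative monotone `u` each monomial of `schur lam u` is at most `u ^ lam`, with equality for
the tableau filling row `i` with `i`. Hence `u ^ lam ≤ schur lam u ≤ #SSYT(lam) * u ^ lam`.

Deleting the letter `0` and lowering the remaining letters maps tableaux of shape `lam`
injectively to tableaux of shapes `ν` with one row fewer interlacing `lam`. By row
multilinearity and the hockey-stick identity, `det (binom (lam i + i) j)` satisfies the same
branching rule with equality, so by induction `#SSYT(lam)` is at most this determinant, which is
`V(lam + δ) / V(δ)` because the falling factorials `x (x - 1) ⋯ (x - j + 1) = j! binom x j` form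
a monic polynomial basis.
-/

/-- A semistandard Young tableau (in the paper's convention) of shape `lam`
(weakly increasing row lengths, rows indexed bottom to top) on alphabet `Fin m`:
entries weakly decrease along each row from left to right, and strictly
decrease from top to bottom along each column. -/
def IsSSYT {m : ℕ} (lam : Fin m → ℕ) (T : (i : Fin m) → Fin (lam i) → Fin m) : Prop :=
  (∀ (i : Fin m) (j j' : Fin (lam i)), j ≤ j' → T i j' ≤ T i j) ∧
  (∀ (i i' : Fin m), i < i' → ∀ (j : Fin (lam i)) (j' : Fin (lam i')),
      (j : ℕ) = (j' : ℕ) → T i j < T i' j')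

/-- The number of cells of the tableau `T` whose entry is the letter `k`. -/
def cellCount {m : ℕ} (lam : Fin m → ℕ)
    (T : (i : Fin m) → Fin (lam i) → Fin m) (k : Fin m) : ℕ :=
  ∑ i : Fin m, (Finset.univ.filter fun j : Fin (lam i) => T i j = k).card

open scoped Classical in
/-- The Schur polynomial of shape `lam` evaluated at `u`, defined combinatorially
(Littlewood's definition) as the sum over all semistandard Young tableaux of
shape `lam` on alphabet `[m]` of the monomial `∏ k, u k ^ (number of k's in T)`. -/
noncomputable def schur {m : ℕ} (lam : Fin m → ℕ) (u : Fin m → ℝ) : ℝ :=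
  ∑ T ∈ Finset.univ.filter (IsSSYT lam), ∏ k : Fin m, u k ^ cellCount lam T k

open Finset

section Tableau

variable {m : ℕ} {lam : Fin m → ℕ} {T : (i : Fin m) → Fin (lam i) → Fin m}

theorem IsSSYT.val_le (hlam : Monotone lam) (hT : IsSSYT lam T) (i : Fin m) (j : Fin (lam i)) :
    (T i j : ℕ) ≤ i := by
  obtain ⟨n, rfl⟩ : ∃ n, m = n + 1 := Nat.exists_eq_add_one_of_ne_zero (Fin.pos i).ne'
  -- the column above `T i j` strictly increases through `n - i` more rows and stays below `n + 1`
  suffices h : ∀ i : Fin (n + 1), ∀ j : Fin (lam i), (T i j : ℕ) + (n - i) ≤ n by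
    have := h i j; omega
  intro i
  induction i using Fin.reverseInduction with
  | last => intro j; have := (T (Fin.last n) j).isLt; simp only [Fin.val_last]; omega
  | cast i ih =>
    intro j
    have hlt := hT.2 _ _ (Fin.castSucc_lt_succ (i := i)) j
      ⟨j, j.isLt.trans_le (hlam (Fin.castSucc_le_succ i))⟩ rfl
    have := ih ⟨j, j.isLt.trans_le (hlam (Fin.castSucc_le_succ i))⟩
    simp only [Fin.val_succ, Fin.val_castSucc, Fin.lt_def] at this hlt ⊢
    omega

theorem prod_pow_cellCount {M : Type*} [CommMonoid M] (T : (i : Fin m) → Fin (lam i) → Fin m)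
    (u : Fin m → M) : ∏ k, u k ^ cellCount lam T k = ∏ i, ∏ j, u (T i j) := by
  simp only [cellCount, ← prod_pow_eq_pow_sum]
  rw [prod_comm]
  refine prod_congr rfl fun i _ => ?_
  simp only [← prod_fiberwise' univ (T i) u, prod_const]

theorem IsSSYT.prod_pow_cellCount_le (hlam : Monotone lam) (hT : IsSSYT lam T) {u : Fin m → ℝ}
    (hu0 : ∀ i, 0 ≤ u i) (hu : Monotone u) :
    ∏ k, u k ^ cellCount lam T k ≤ ∏ i, u i ^ lam i := by
  rw [prod_pow_cellCount]
  refine prod_le_prod (fun i _ => prod_nonneg fun j _ => hu0 _) fun i _ => ?_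
  calc ∏ j, u (T i j) ≤ ∏ _j : Fin (lam i), u i :=
        prod_le_prod (fun j _ => hu0 _) fun j _ => hu (Fin.le_def.mpr (hT.val_le hlam i j))
    _ = u i ^ lam i := by simp

theorem isSSYT_rowIndex (lam : Fin m → ℕ) : IsSSYT lam fun i _ => i :=
  ⟨fun _ _ _ _ => le_rfl, fun _ _ h _ _ _ => h⟩

theorem cellCount_rowIndex (lam : Fin m → ℕ) (k : Fin m) :
    cellCount lam (fun i _ => i) k = lam k := by
  rw [cellCount, sum_eq_single k (fun i _ hik => by simp [hik]) (by simp)]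
  simp

open scoped Classical in
theorem prod_pow_le_schur {u : Fin m → ℝ} (hu0 : ∀ i, 0 ≤ u i) :
    ∏ i, u i ^ lam i ≤ schur lam u := by
  simp only [← cellCount_rowIndex lam]
  exact single_le_sum (fun T _ => prod_nonneg fun k _ => pow_nonneg (hu0 k) _)
    (mem_filter.mpr ⟨mem_univ _, isSSYT_rowIndex lam⟩)

open scoped Classical in
theorem schur_le_card_mul (hlam : Monotone lam) {u : Fin m → ℝ} (hu0 : ∀ i, 0 ≤ u i)
    (hu : Monotone u) :
    schur lam u ≤ #{T | IsSSYT lam T} * ∏ i, u i ^ lam i := by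
  rw [← nsmul_eq_mul]
  exact sum_le_card_nsmul _ _ _ fun T hT =>
    (mem_filter.mp hT).2.prod_pow_cellCount_le hlam hu0 hu

end Tableau

theorem Fin.mem_iff_val_lt_card_of_isLowerSet {L : ℕ} {S : Finset (Fin L)}
    (hS : IsLowerSet (S : Set (Fin L))) (j : Fin L) : j ∈ S ↔ (j : ℕ) < #S := by
  constructor
  · intro hj
    simpa using card_le_card fun b (hb : b ∈ Iic j) => hS (mem_Iic.mp hb) hj
  · intro hlt
    by_contra hj
    have := card_le_card fun b hb => mem_Iio.mpr (lt_of_not_ge fun hjb => hj (hS hjb hb))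
    simp only [Fin.card_Iio] at this
    omega

def interlacing {n : ℕ} (lam : Fin (n + 1) → ℕ) : Finset (Fin n → ℕ) :=
  Icc (fun i => lam i.castSucc) (fun i => lam i.succ)

theorem Monotone.of_mem_interlacing {n : ℕ} {lam : Fin (n + 1) → ℕ} (hlam : Monotone lam)
    {ν : Fin n → ℕ} (hν : ν ∈ interlacing lam) : Monotone ν := by
  intro a b hab
  obtain rfl | h := hab.eq_or_lt
  · rfl
  exact ((mem_Icc.mp hν).2 a).trans
    ((hlam (Fin.succ_le_castSucc_iff.mpr h)).trans ((mem_Icc.mp hν).1 b))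

section Strip

variable {n : ℕ} {lam : Fin (n + 1) → ℕ}
  {T : (i : Fin (n + 1)) → Fin (lam i) → Fin (n + 1)}

/-- The cells holding `0` are all of row `0` and a right end of every other row; deleting them
leaves rows of these lengths. -/
def stripShape (T : (i : Fin (n + 1)) → Fin (lam i) → Fin (n + 1)) (i : Fin n) : ℕ :=
  #{j | T i.succ j ≠ 0}

theorem stripShape_le (T : (i : Fin (n + 1)) → Fin (lam i) → Fin (n + 1)) (i : Fin n) :
    stripShape T i ≤ lam i.succ :=
  (card_filter_le _ _).trans_eq (card_fin _)

/-- The tableau left after deleting the letter `0`, with the remaining letters lowered by one. -/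
def strip (T : (i : Fin (n + 1)) → Fin (lam i) → Fin (n + 1)) :
    (i : Fin n) → Fin (stripShape T i) → Fin n := fun i j =>
  ⟨(T i.succ (Fin.castLE (stripShape_le T i) j) : ℕ) - 1, by
    have := (T i.succ (Fin.castLE (stripShape_le T i) j)).isLt; have := i.isLt; omega⟩

variable (lam) in
def unstrip (ν : Fin n → ℕ) (S : (i : Fin n) → Fin (ν i) → Fin n) :
    (i : Fin (n + 1)) → Fin (lam i) → Fin (n + 1) :=
  Fin.cases (fun _ => 0) fun i j => if h : (j : ℕ) < ν i then (S i ⟨j, h⟩).succ else 0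

theorem IsSSYT.ne_zero_iff_lt_stripShape (hT : IsSSYT lam T) (i : Fin n) (j : Fin (lam i.succ)) :
    T i.succ j ≠ 0 ↔ (j : ℕ) < stripShape T i := by
  have hS : IsLowerSet (({j | T i.succ j ≠ 0} : Finset _) : Set (Fin (lam i.succ))) := by
    intro a b hba ha
    simp only [coe_filter, mem_univ, true_and, Set.mem_ofPred_eq] at ha ⊢
    exact fun hb => ha (nonpos_iff_eq_zero.mp (hb ▸ hT.1 _ _ _ hba))
  rw [stripShape, ← Fin.mem_iff_val_lt_card_of_isLowerSet hS]
  simp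

theorem IsSSYT.le_stripShape (hlam : Monotone lam) (hT : IsSSYT lam T) (i : Fin n) :
    lam i.castSucc ≤ stripShape T i := by
  by_contra! h
  have hlt := hT.2 _ _ (Fin.castSucc_lt_succ (i := i)) ⟨_, h⟩
    ⟨_, h.trans_le (hlam (Fin.castSucc_le_succ i))⟩ rfl
  exact lt_irrefl _ ((hT.ne_zero_iff_lt_stripShape i _).mp ((Fin.zero_le _).trans_lt hlt).ne')

theorem IsSSYT.stripShape_mem_interlacing (hlam : Monotone lam) (hT : IsSSYT lam T) :
    stripShape T ∈ interlacing lam :=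
  mem_Icc.mpr ⟨hT.le_stripShape hlam, stripShape_le T⟩

theorem IsSSYT.one_le_of_lt_stripShape (hT : IsSSYT lam T) (i : Fin n) (j : Fin (lam i.succ))
    (hj : (j : ℕ) < stripShape T i) : 1 ≤ (T i.succ j : ℕ) :=
  Nat.one_le_iff_ne_zero.mpr (Fin.val_ne_zero_iff.mpr ((hT.ne_zero_iff_lt_stripShape i j).mpr hj))

theorem isSSYT_strip (hT : IsSSYT lam T) : IsSSYT (stripShape T) (strip T) := by
  refine ⟨fun i j j' hjj' => ?_, fun i i' hii' j j' hjj' => ?_⟩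
  · have := Fin.le_def.mp (hT.1 i.succ (Fin.castLE (stripShape_le T i) j)
      (Fin.castLE (stripShape_le T i) j') hjj')
    simp only [strip, Fin.le_def]
    omega
  · have hlt := Fin.lt_def.mp (hT.2 i.succ i'.succ (Fin.succ_lt_succ_iff.mpr hii')
      (Fin.castLE (stripShape_le T i) j) (Fin.castLE (stripShape_le T i') j') hjj')
    have := hT.one_le_of_lt_stripShape i (Fin.castLE (stripShape_le T i) j) j.isLt
    simp only [strip, Fin.lt_def]
    omega

theorem IsSSYT.unstrip_strip (hlam : Monotone lam) (hT : IsSSYT lam T) :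
    unstrip lam (stripShape T) (strip T) = T := by
  funext i j
  induction i using Fin.cases with
  | zero => exact Fin.ext (Nat.le_zero.mp (hT.val_le hlam 0 j)).symm
  | succ i =>
    simp only [unstrip, Fin.cases_succ]
    split_ifs with hj
    · have := hT.one_le_of_lt_stripShape i j hj
      ext
      exact Nat.sub_add_cancel this
    · exact (not_not.mp (mt (hT.ne_zero_iff_lt_stripShape i j).mp hj)).symm

end Strip

open scoped Classical in
theorem card_isSSYT_le_sum_card {n : ℕ} {lam : Fin (n + 1) → ℕ} (hlam : Monotone lam) :
    #{T | IsSSYT lam T} ≤ ∑ ν ∈ interlacing lam, #{S | IsSSYT ν S} := by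
  rw [← card_sigma]
  refine card_le_card_of_injOn (fun T => ⟨stripShape T, strip T⟩) (fun T hT => ?_)
    (Set.LeftInvOn.injOn (f₁' := fun p => unstrip lam p.1 p.2)
      fun T hT => (mem_filter.mp hT).2.unstrip_strip hlam)
  have hT := (mem_filter.mp hT).2
  simp only [coe_sigma, Set.mem_sigma_iff, coe_filter, mem_univ, true_and]
  exact ⟨hT.stripShape_mem_interlacing hlam, isSSYT_strip hT⟩

section BinomialDet

open Matrix

variable (R : Type*) [CommRing R]

def binomialDet {m : ℕ} (lam : Fin m → ℕ) : R :=
  (of fun i j : Fin m => ((lam i + i).choose j : R)).det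

theorem binomialDet_zero (m : ℕ) : binomialDet R (fun _ : Fin m => 0) = 1 := by
  rw [binomialDet, det_of_isLowerTriangular _ fun i j (hij : i < j) => by
    simp [Nat.choose_eq_zero_of_lt (Fin.lt_def.mp hij)]]
  simp

theorem det_vandermonde_natCast_add_val [IsDomain R] {m : ℕ} (lam : Fin m → ℕ) :
    (vandermonde fun i : Fin m => ((lam i + i : ℕ) : R)).det =
      (∏ i : Fin m, ((i : ℕ).factorial : R)) * binomialDet R lam := by
  rw [det_eval_matrixOfPolynomials_eq_det_vandermonde _ (fun i => descPochhammer R i)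
    (fun i => descPochhammer_natDegree R i) (fun i => monic_descPochhammer R i), binomialDet,
    ← det_mul_row]
  congr 1
  ext i j
  simp only [of_apply, descPochhammer_eval_eq_descFactorial,
    Nat.descFactorial_eq_factorial_mul_choose, Nat.cast_mul]

theorem sum_Icc_natCast_choose_add (a k : ℕ) {s t : ℕ} (hst : s ≤ t) :
    ∑ c ∈ Icc s t, ((c + a).choose k : R) =
      ((t + a + 1).choose (k + 1) : R) - ((s + a).choose (k + 1) : R) := by
  have pascal : ∀ c, ((c + a).choose k : R) =
      ((c + 1 + a).choose (k + 1) : R) - ((c + a).choose (k + 1) : R) := fun c => by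
    rw [add_right_comm, Nat.choose_succ_succ', Nat.cast_add, add_sub_cancel_right]
  simp only [pascal]
  rw [Finset.sum_Icc_sub hst (fun c => ((c + a).choose (k + 1) : R)), add_right_comm]

/-- Subtracting from each row of `binom (y i) j` the previous one clears the column `j = 0`
except for its top entry `1`. -/
theorem det_natCast_choose_eq_det_sub (n : ℕ) (y : Fin (n + 1) → ℕ) :
    (of fun i j : Fin (n + 1) => ((y i).choose j : R)).det =
      (of fun i j : Fin n =>
        ((y i.succ).choose (j + 1) : R) - ((y i.castSucc).choose (j + 1) : R)).det := by
  refine (det_eq_of_forall_row_eq_smul_add_pred (A := of fun i j => ((y i).choose j : R))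
    (B := of fun i j => Fin.cases (motive := fun _ => R) ((y 0).choose j : R)
      (fun i => ((y i.succ).choose j : R) - ((y i.castSucc).choose j : R)) i)
    1 (fun j => rfl) (fun i j => by simp)).trans ?_
  rw [det_succ_column_zero, Fin.sum_univ_succ]
  simp [Fin.succAbove_zero]
  rfl

theorem sum_binomialDet_interlacing {n : ℕ} {lam : Fin (n + 1) → ℕ} (hlam : Monotone lam) :
    ∑ ν ∈ interlacing lam, binomialDet R ν = binomialDet R lam := by
  have rows : (fun i : Fin n => ∑ c ∈ Icc (lam i.castSucc) (lam i.succ),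
        fun j : Fin n => ((c + i).choose j : R)) =
      fun (i j : Fin n) => ((lam i.succ + (i.succ : ℕ)).choose (j + 1) : R) -
        ((lam i.castSucc + (i.castSucc : ℕ)).choose (j + 1) : R) := by
    ext i j
    rw [Finset.sum_apply, sum_Icc_natCast_choose_add R _ _ (hlam (Fin.castSucc_le_succ i))]
    simp only [Fin.val_succ, Fin.val_castSucc, add_assoc]
  rw [binomialDet, det_natCast_choose_eq_det_sub, ← rows, interlacing, Pi.Icc_eq]
  exact ((detRowAlternating : (Fin n → R) [⋀^Fin n]→ₗ[R] R).map_sum_finset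
    (fun (i : Fin n) (c : ℕ) (j : Fin n) => ((c + i).choose j : R))
    fun i => Icc (lam i.castSucc) (lam i.succ)).symm

end BinomialDet

open scoped Classical in
theorem card_isSSYT_le_binomialDet {R : Type*} [CommRing R] [PartialOrder R] [IsOrderedRing R]
    {m : ℕ} {lam : Fin m → ℕ} (hlam : Monotone lam) :
    (#{T | IsSSYT lam T} : R) ≤ binomialDet R lam := by
  induction m with
  | zero =>
    simpa [binomialDet] using (Nat.mono_cast (α := R) (card_le_one_of_subsingleton _)).trans_eq
      Nat.cast_one
  | succ n ih =>
    calc (#{T | IsSSYT lam T} : R)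
        ≤ ∑ ν ∈ interlacing lam, (#{S | IsSSYT ν S} : R) :=
          (Nat.mono_cast (card_isSSYT_le_sum_card hlam)).trans_eq (Nat.cast_sum _ _)
      _ ≤ ∑ ν ∈ interlacing lam, binomialDet R ν :=
        sum_le_sum fun ν hν => ih (hlam.of_mem_interlacing hν)
      _ = binomialDet R lam := sum_binomialDet_interlacing R hlam

theorem vandermonde_ratio_eq_binomialDet {K : Type*} [Field K] [CharZero K] {m : ℕ}
    (lam : Fin m → ℕ) :
    (∏ i : Fin m, ∏ j ∈ Ioi i, (((lam j : K) + (j : ℕ)) - ((lam i : K) + (i : ℕ)))) /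
        ∏ i : Fin m, ∏ j ∈ Ioi i, (((j : ℕ) : K) - ((i : ℕ) : K)) =
      binomialDet K lam := by
  have hδ := det_vandermonde_natCast_add_val K (fun _ : Fin m => 0)
  simp only [zero_add, binomialDet_zero, mul_one] at hδ
  have hcast : (fun j => (lam j : K) + (j : ℕ)) = fun j => ((lam j + j : ℕ) : K) := by
    push_cast; rfl
  rw [← Matrix.det_vandermonde, ← Matrix.det_vandermonde, hδ, hcast,
    det_vandermonde_natCast_add_val, mul_div_cancel_left₀]
  exact prod_ne_zero_iff.mpr fun i _ => Nat.cast_ne_zero.mpr (Nat.factorial_ne_zero _)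

theorem schur_first_order_approximation_general (m : ℕ) (lam : Fin m → ℕ)
    (hlam : Monotone lam) (u : Fin m → ℝ) (hu0 : ∀ i, 0 ≤ u i) (hu : Monotone u) :
    (∏ i : Fin m, u i ^ lam i) ≤ schur lam u ∧
    schur lam u ≤
      ((∏ i : Fin m, ∏ j ∈ Finset.Ioi i, (((lam j : ℝ) + (j : ℕ)) - ((lam i : ℝ) + (i : ℕ)))) /
          ∏ i : Fin m, ∏ j ∈ Finset.Ioi i, (((j : ℕ) : ℝ) - ((i : ℕ) : ℝ))) *
        ∏ i : Fin m, u i ^ lam i := by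
  refine ⟨prod_pow_le_schur hu0, (schur_le_card_mul hlam hu0 hu).trans ?_⟩
  rw [vandermonde_ratio_eq_binomialDet]
  exact mul_le_mul_of_nonneg_right (card_isSSYT_le_binomialDet hlam)
    (prod_nonneg fun i _ => pow_nonneg (hu0 i) _)

theorem schur_first_order_approximation (m : ℕ) (hm : 0 < m) (lam : Fin m → ℕ)
    (hlam : Monotone lam) (u : Fin m → ℝ) (hu0 : ∀ i, 0 ≤ u i) (hu : Monotone u) :
    (∏ i : Fin m, u i ^ lam i) ≤ schur lam u ∧
    schur lam u ≤
      ((∏ i : Fin m, ∏ j ∈ Finset.Ioi i, (((lam j : ℝ) + (j : ℕ)) - ((lam i : ℝ) + (i : ℕ)))) /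
          ∏ i : Fin m, ∏ j ∈ Finset.Ioi i, (((j : ℕ) : ℝ) - ((i : ℕ) : ℝ))) *
        ∏ i : Fin m, u i ^ lam i :=
  schur_first_order_approximation_general m lam hlam u hu0 hu
end

section
/- Let f : [0,1] → [0,1] be the Gaussian-type kernel restricted map f(x) = e^{-Bx} with B ≥ 1, let D ≥ 2, and let M be the (D+1)×(D+1) matrix M[ℓ,p] = f(α_ℓ · p) where α_ℓ are chosen so that the values x_ℓ = e^{-B α_ℓ} form an arithmetic progression with common difference (1 - e^{-B/D})/D starting at 1. Then for all s, t, |det(M^{s-}_{t-})/det(M)| ≤ 2^D · ((1 - e^{-B/D})/(2e))^{-D}, and consequently τ(M) := max_{b≠0} ‖M^{-1}b‖_∞/‖b‖_∞ ≤ (5e/(1 - e^{-B/D}))^D. -/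
/-!
With `δ = 1 - e^{-B/D}` and `h = δ / D`, the matrix `M` is the Vandermonde matrix of the
equispaced nodes `x_ℓ = 1 - ℓ h ∈ [-1, 1]`. Column `s` of `M⁻¹` holds the coefficients of
the Lagrange basis polynomial `∏_{i ≠ s} (X - x_i) / (x_s - x_i)`: the numerator has
coefficients at most `C(D, t)` because the nodes lie in `[-1, 1]`, and the denominator is
`h^D s! (D - s)!`. Summing over `s`, every row of `M⁻¹` has absolute sum at most
`4^D / (h^D D!) ≤ (4e/δ)^D`, using `D^D ≤ D! e^D`. By Cramer's rule this bounds the minor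
ratios, and it bounds `τ(M)`.
-/

open Finset Polynomial Nat Matrix

theorem Real.pow_le_factorial_mul_exp_one_pow (n : ℕ) :
    (n : ℝ) ^ n ≤ n ! * Real.exp 1 ^ n := by
  have h := Real.pow_div_factorial_le_exp (x := n) (Nat.cast_nonneg n) n
  rwa [div_le_iff₀ (by positivity), ← Real.exp_one_pow, mul_comm] at h

theorem Real.pow_div_factorial_le_mul_exp_one_div_pow {y : ℝ} (hy : 0 ≤ y) (n : ℕ) :
    y ^ n / n ! ≤ (y * Real.exp 1 / n) ^ n := by
  rcases n.eq_zero_or_pos with rfl | hn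
  · simp
  rw [div_pow, mul_pow, le_div_iff₀ (by positivity), div_mul_eq_mul_div,
    div_le_iff₀ (by positivity), mul_assoc]
  exact mul_le_mul_of_nonneg_left
    ((Real.pow_le_factorial_mul_exp_one_pow n).trans_eq (mul_comm _ _)) (by positivity)

theorem Polynomial.abs_coeff_prod_X_sub_C_le {R ι : Type*} [CommRing R] [LinearOrder R]
    [IsStrictOrderedRing R] (s : Finset ι) (a : ι → R) (ha : ∀ i ∈ s, |a i| ≤ 1)
    (k : ℕ) : |(∏ i ∈ s, (X - C (a i))).coeff k| ≤ ((#s).choose k : R) := by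
  rcases le_or_gt k #s with hk | hk
  · simp only [sub_eq_add_neg, ← map_neg C]
    rw [prod_X_add_C_coeff s _ hk]
    calc |∑ t ∈ s.powersetCard (#s - k), ∏ i ∈ t, -a i|
        ≤ ∑ t ∈ s.powersetCard (#s - k), (1 : R) := by
          refine (abs_sum_le_sum_abs _ _).trans (sum_le_sum fun t ht => ?_)
          rw [abs_prod]
          refine prod_le_one (fun _ _ => abs_nonneg _) fun i hi => ?_
          rw [abs_neg]
          exact ha i ((mem_powersetCard.1 ht).1 hi)
      _ = (#s).choose k := by
          rw [sum_const, card_powersetCard, Nat.choose_symm hk, nsmul_one]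
  · rw [coeff_eq_zero_of_natDegree_lt (by rwa [natDegree_finsetProd_X_sub_C_eq_card]),
      abs_zero, Nat.choose_eq_zero_of_lt hk, Nat.cast_zero]

theorem Lagrange.abs_coeff_basis_le {K ι : Type*} [Field K] [LinearOrder K]
    [IsStrictOrderedRing K] [DecidableEq ι] (s : Finset ι) (v : ι → K)
    (hv : ∀ j ∈ s, |v j| ≤ 1) (i : ι) (k : ℕ) :
    |(Lagrange.basis s v i).coeff k| ≤
      (#(s.erase i)).choose k / ∏ j ∈ s.erase i, |v i - v j| := by
  have hbasis : Lagrange.basis s v i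
      = C (∏ j ∈ s.erase i, (v i - v j)⁻¹) * ∏ j ∈ s.erase i, (X - C (v j)) := by
    simp only [Lagrange.basis, Lagrange.basisDivisor, prod_mul_distrib, map_prod]
  rw [hbasis, coeff_C_mul, abs_mul, abs_prod, div_eq_inv_mul, ← prod_inv_distrib]
  simp only [abs_inv]
  exact mul_le_mul_of_nonneg_left
    (abs_coeff_prod_X_sub_C_le _ _ (fun j hj => hv j (mem_of_mem_erase hj)) k) (by positivity)

theorem Matrix.inv_vandermonde {K : Type*} [Field K] {n : ℕ} {v : Fin n → K}
    (hv : Function.Injective v) :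
    (vandermonde v)⁻¹ = of fun (k i : Fin n) => (Lagrange.basis univ v i).coeff k := by
  refine inv_eq_right_inv (ext fun i j => ?_)
  have hdeg : (Lagrange.basis univ v j).natDegree < n := by
    rw [Lagrange.natDegree_basis hv.injOn (mem_univ j), Finset.card_univ, Fintype.card_fin]
    exact Nat.sub_lt (Fin.pos j) one_pos
  have heval : ∑ k, vandermonde v i k * (Lagrange.basis univ v j).coeff k
      = (Lagrange.basis univ v j).eval (v i) := by
    rw [eval_eq_sum_range' hdeg, ← Fin.sum_univ_eq_sum_range]
    simp only [vandermonde_apply, mul_comm]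
  rw [mul_apply]
  simp only [of_apply]
  rw [heval, one_apply]
  split_ifs with hij
  · rw [hij, Lagrange.eval_basis_self hv.injOn (mem_univ j)]
  · exact Lagrange.eval_basis_of_ne (Ne.symm hij) (mem_univ i)

theorem prod_range_erase_abs_natCast_sub {R : Type*} [CommRing R] [LinearOrder R]
    [IsStrictOrderedRing R] {n s : ℕ} (hs : s ≤ n) :
    ∏ i ∈ (range (n + 1)).erase s, |(i : R) - s| = s ! * (n - s)! := by
  have hsplit : (range (n + 1)).erase s = range s ∪ Ico (s + 1) (n + 1) := by
    ext i; simp only [mem_erase, mem_range, mem_union, mem_Ico]; omega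
  have hdisj : Disjoint (range s) (Ico (s + 1) (n + 1)) := by
    rw [disjoint_left]; intro i hi hi'; simp only [mem_range, mem_Ico] at hi hi'; omega
  rw [hsplit, prod_union hdisj]
  congr 1
  · rw [← prod_range_add_one_eq_factorial, Nat.cast_prod,
      ← prod_range_reflect (fun i => |(i : R) - s|)]
    refine prod_congr rfl fun i hi => ?_
    have hreflect : ((s - 1 - i : ℕ) : R) = s - ((i + 1 : ℕ) : R) := by
      rw [eq_sub_iff_add_eq, ← Nat.cast_add, show s - 1 - i + (i + 1) = s by
        have := mem_range.1 hi; omega]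
    rw [hreflect, sub_sub_cancel_left, abs_neg, abs_of_nonneg (by positivity)]
  · rw [prod_Ico_eq_prod_range, show n + 1 - (s + 1) = n - s by omega,
      ← prod_range_add_one_eq_factorial, Nat.cast_prod]
    refine prod_congr rfl fun i _ => ?_
    push_cast
    rw [show (s : R) + 1 + i - s = i + 1 by ring, abs_of_nonneg (by positivity)]

theorem Fin.prod_erase_abs_sub_arithmetic {R : Type*} [CommRing R] [LinearOrder R]
    [IsStrictOrderedRing R] (a h : R) {n : ℕ} (s : Fin (n + 1)) :
    ∏ i ∈ univ.erase s, |(a - s * h) - (a - i * h)| = |h| ^ n * (s ! * (n - s)!) := by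
  have hcard : #(univ.erase s) = n := by simp [Finset.card_erase_of_mem]
  have hval : (univ.erase s).map Fin.valEmbedding = (range (n + 1)).erase s := by
    rw [map_erase, Fin.map_valEmbedding_univ, Nat.Iio_eq_range]
    rfl
  calc ∏ i ∈ univ.erase s, |(a - s * h) - (a - i * h)|
      = ∏ i ∈ univ.erase s, |h| * |((i : ℕ) : R) - s| :=
        prod_congr rfl fun i _ => by rw [← abs_mul]; congr 1; ring
    _ = |h| ^ n * (s ! * (n - s)!) := by
        rw [prod_mul_distrib, Finset.prod_const, hcard,
          ← prod_range_erase_abs_natCast_sub (Nat.lt_succ_iff.1 s.isLt), ← hval, prod_map]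
        rfl

theorem Matrix.abs_inv_vandermonde_arithmetic_apply_le {n : ℕ} {h : ℝ} (hh : 0 < h)
    (hnh : n * h ≤ 2) (t s : Fin (n + 1)) :
    |(vandermonde fun i : Fin (n + 1) => 1 - (i : ℕ) * h)⁻¹ t s|
      ≤ n.choose t * n.choose s / (h ^ n * n !) := by
  have hnodes : ∀ i : Fin (n + 1), |1 - (i : ℕ) * h| ≤ 1 := fun i => by
    have hi : ((i : ℕ) : ℝ) ≤ n := by exact_mod_cast Nat.lt_succ_iff.1 i.isLt
    rw [abs_le]
    constructor <;> nlinarith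
  have hinj : Function.Injective fun i : Fin (n + 1) => 1 - (i : ℕ) * h := fun i j hij =>
    Fin.ext (by simpa [hh.ne'] using hij)
  rw [inv_vandermonde hinj, of_apply]
  refine (Lagrange.abs_coeff_basis_le _ _ (fun j _ => hnodes j) s t).trans_eq ?_
  rw [card_erase_of_mem (mem_univ s), Finset.card_univ, Fintype.card_fin, Nat.add_sub_cancel,
    Fin.prod_erase_abs_sub_arithmetic, abs_of_pos hh,
    Nat.cast_choose ℝ (Nat.lt_succ_iff.1 s.isLt)]
  field_simp

theorem Matrix.sum_abs_inv_vandermonde_arithmetic_le {n : ℕ} {h : ℝ} (hh : 0 < h)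
    (hnh : n * h ≤ 2) (t : Fin (n + 1)) :
    ∑ s, |(vandermonde fun i : Fin (n + 1) => 1 - (i : ℕ) * h)⁻¹ t s|
      ≤ (4 / h) ^ n / n ! := by
  calc ∑ s, |(vandermonde fun i : Fin (n + 1) => 1 - (i : ℕ) * h)⁻¹ t s|
      ≤ ∑ s : Fin (n + 1), n.choose t * n.choose s / (h ^ n * n !) :=
        sum_le_sum fun s _ => abs_inv_vandermonde_arithmetic_apply_le hh hnh t s
    _ = n.choose t * 2 ^ n / (h ^ n * n !) := by
        rw [← sum_div, ← mul_sum, Fin.sum_univ_eq_sum_range (fun s => (n.choose s : ℝ)),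
          ← Nat.cast_sum, Nat.sum_range_choose, Nat.cast_pow, Nat.cast_two]
    _ ≤ 2 ^ n * 2 ^ n / (h ^ n * n !) := by
        gcongr
        exact_mod_cast Nat.choose_le_two_pow n t
    _ = (4 / h) ^ n / n ! := by
        rw [div_pow, div_div, ← mul_pow]
        norm_num

theorem Matrix.abs_det_submatrix_succAbove_div_det {K : Type*} [Field K] [LinearOrder K]
    [IsStrictOrderedRing K] {n : ℕ} (A : Matrix (Fin (n + 1)) (Fin (n + 1)) K)
    (s t : Fin (n + 1)) :
    |(A.submatrix s.succAbove t.succAbove).det / A.det| = |A⁻¹ t s| := by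
  rw [inv_def, smul_apply, smul_eq_mul, Ring.inverse_eq_inv, adjugate_fin_succ_eq_det_submatrix,
    abs_mul, abs_mul, abs_pow, abs_neg, abs_one, one_pow, one_mul, abs_div, abs_inv,
    div_eq_inv_mul]

theorem Matrix.norm_mulVec_le_of_sum_abs_le {m n : Type*} [Fintype m] [Fintype n]
    (A : Matrix m n ℝ) {C : ℝ} (hC : 0 ≤ C) (hA : ∀ i, ∑ j, |A i j| ≤ C) (b : n → ℝ) :
    ‖A *ᵥ b‖ ≤ C * ‖b‖ := by
  refine (pi_norm_le_iff_of_nonneg (by positivity)).2 fun i => ?_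
  calc ‖(A *ᵥ b) i‖ = |∑ j, A i j * b j| := rfl
    _ ≤ ∑ j, |A i j| * ‖b‖ := by
      refine (abs_sum_le_sum_abs _ _).trans (sum_le_sum fun j _ => ?_)
      rw [abs_mul]
      exact mul_le_mul_of_nonneg_left (norm_le_pi_norm b j) (abs_nonneg _)
    _ ≤ C * ‖b‖ := by rw [← sum_mul]; exact mul_le_mul_of_nonneg_right (hA i) (norm_nonneg b)

theorem gaussian_counting_matrix_tau_bound (D : ℕ) (hD : 2 ≤ D) (B : ℝ) (hB : 1 ≤ B)
    (α : Fin (D + 1) → ℝ)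
    (hα : ∀ ℓ : Fin (D + 1),
      Real.exp (-(B * α ℓ)) = 1 - (ℓ : ℕ) * ((1 - Real.exp (-(B / D))) / D))
    (M : Matrix (Fin (D + 1)) (Fin (D + 1)) ℝ)
    (hM : ∀ ℓ p : Fin (D + 1), M ℓ p = Real.exp (-(B * (α ℓ * (p : ℕ))))) :
    (∀ s t : Fin (D + 1),
      |(M.submatrix s.succAbove t.succAbove).det / M.det| ≤
        2 ^ D * (((1 - Real.exp (-(B / D))) / (2 * Real.exp 1)) ^ D)⁻¹) ∧
    ∀ b : Fin (D + 1) → ℝ,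
      ‖M⁻¹.mulVec b‖ ≤ (5 * Real.exp 1 / (1 - Real.exp (-(B / D)))) ^ D * ‖b‖ := by
  set δ := 1 - Real.exp (-(B / D))
  have hDpos : (0 : ℝ) < D := by exact_mod_cast (by omega : 0 < D)
  have hδpos : 0 < δ := sub_pos.2 (Real.exp_lt_one_iff.2 (neg_lt_zero.2 (by positivity)))
  have hδ1 : δ < 1 := sub_lt_self 1 (Real.exp_pos _)
  have hMV : M = vandermonde fun ℓ : Fin (D + 1) => 1 - (ℓ : ℕ) * (δ / D) :=
    ext fun ℓ p => by
      rw [hM, vandermonde_apply, ← hα, ← Real.exp_nat_mul]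
      ring_nf
  have hrow : ∀ t, ∑ s, |M⁻¹ t s| ≤ (4 * Real.exp 1 / δ) ^ D := fun t => by
    rw [hMV]
    refine (sum_abs_inv_vandermonde_arithmetic_le (by positivity) ?_ t).trans ?_
    · rw [mul_div_cancel₀ _ hDpos.ne']
      linarith
    · refine (Real.pow_div_factorial_le_mul_exp_one_div_pow (by positivity) D).trans_eq ?_
      congr 1
      field_simp
  refine ⟨fun s t => ?_, fun b => ?_⟩
  · rw [abs_det_submatrix_succAbove_div_det]
    calc |M⁻¹ t s| ≤ ∑ s, |M⁻¹ t s| :=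
          single_le_sum (f := fun s => |M⁻¹ t s|) (fun _ _ => abs_nonneg _) (mem_univ s)
      _ ≤ (4 * Real.exp 1 / δ) ^ D := hrow t
      _ = 2 ^ D * ((δ / (2 * Real.exp 1)) ^ D)⁻¹ := by
          rw [← inv_pow, inv_div, ← mul_pow]
          ring_nf
  · refine norm_mulVec_le_of_sum_abs_le _ (by positivity) (fun t => (hrow t).trans ?_) b
    gcongr
    norm_num
end

section
/- Let ρ ≥ 1 be real, D ≥ 2 an integer, and set α_i = β_i = i/D for i ∈ [D]. Let M be the D×D matrix with M[i,j] = 1/(1 + (α_i β_j)^ρ). Then for all s,t ∈ [D], |det(M)/det(M^{s-}_{t-})| ≥ 2^{-(2D-1)} · (3e)^{-2ρD}, and hence τ(M) := max_{b≠0} ‖M^{-1}b‖_∞/‖b‖_∞ ≤ (7e)^{2ρD}. -/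
/-!
Put `a i = ((i + 1) / (n + 1)) ^ ρ`. Then `M i j = (1 + a i * a j)⁻¹ = (a j)⁻¹ * (a i + (a j)⁻¹)⁻¹`
is a column-scaled Cauchy matrix, whose inverse is explicit (Lagrange interpolation at the nodes
`-(a j)⁻¹`): `M⁻¹ j k` is
`∏ₘ (1 + a k a m) ∏_{m ≠ k} (1 + a m a j) / (∏_{m ≠ k} (a k - a m) ∏_{m ≠ j} (a m - a j))`.
The numerator is at most `2 ^ (2n + 1)`. Superadditivity of `x ↦ x ^ ρ` gives
`|a k - a m| ≥ (|k - m| / (n + 1)) ^ ρ`, so each product in the denominator is at least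
`(k! (n - k)! / (n + 1) ^ n) ^ ρ ≥ (3e) ^ (-ρ (n + 1))`, using `(n + 1) ^ n ≤ n! e ^ (n + 1)` and
`n! ≤ 2 ^ n k! (n - k)!`. By the adjugate formula `|det M / det M^{s-}_{t-}| = |M⁻¹ t s|⁻¹`, and
summing a row of `M⁻¹` bounds `τ(M)`.
-/

open Finset
open scoped Nat

section

variable {K ι : Type*} [Field K] [Fintype ι] [DecidableEq ι]

theorem prod_erase_sub_ne_zero_iff_injective {x : ι → K} :
    (∀ j, ∏ m ∈ univ.erase j, (x j - x m) ≠ 0) ↔ Function.Injective x := by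
  simp only [prod_ne_zero_iff, mem_erase, sub_ne_zero]
  exact ⟨fun h i j hij => by_contra fun hne => h j i ⟨hne, mem_univ i⟩ hij.symm,
    fun hx j m hm h => hm.1 (hx h).symm⟩

theorem injective_of_le_prod_erase_abs_sub {x : ι → ℝ} {c : ℝ} (hc : 0 < c)
    (hx : ∀ k, c ≤ ∏ m ∈ univ.erase k, |x k - x m|) : Function.Injective x :=
  prod_erase_sub_ne_zero_iff_injective.mp fun k h => by
    have := hx k
    rw [← abs_prod, h, abs_zero] at this
    linarith

end

namespace Matrix

variable {K ι : Type*} [Field K] [Fintype ι] [DecidableEq ι]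

def cauchy (x y : ι → K) : Matrix ι ι K := of fun i j => (x i - y j)⁻¹

def cauchyInv (x y : ι → K) : Matrix ι ι K := of fun j k =>
  (∏ m, (x k - y m)) / (∏ m ∈ univ.erase k, (x k - x m)) *
    ((∏ m ∈ univ.erase k, (y j - x m)) / ∏ m ∈ univ.erase j, (y j - y m))

theorem cauchy_mul_cauchyInv {x y : ι → K} (hx : Function.Injective x)
    (hy : Function.Injective y) (hxy : ∀ i j, x i ≠ y j) :
    cauchy x y * cauchyInv x y = 1 := by
  ext i k
  set p := Lagrange.nodal (univ.erase k) x
  have hp : p.degree < #(univ : Finset ι) := by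
    rw [Lagrange.degree_nodal, card_erase_of_mem (mem_univ k)]
    exact_mod_cast Nat.sub_lt (card_pos.mpr ⟨k, mem_univ k⟩) one_pos
  -- barycentric form of the Lagrange interpolant of `p` at the nodes `y`, evaluated at `x i`
  have hbary := Lagrange.eval_interpolate_not_at_node (s := univ) (v := y)
    (fun j => p.eval (y j)) (x := x i) fun j _ => hxy i j
  rw [← Lagrange.eq_interpolate hy.injOn hp] at hbary
  simp only [Lagrange.eval_nodal, Lagrange.nodalWeight, prod_inv_distrib, p] at hbary
  have hxi : ∏ m, (x i - y m) ≠ 0 := prod_ne_zero_iff.mpr fun m _ => sub_ne_zero.mpr (hxy i m)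
  have hxk := prod_erase_sub_ne_zero_iff_injective.mpr hx k
  calc (cauchy x y * cauchyInv x y) i k
      = (∏ m, (x k - y m)) / (∏ m ∈ univ.erase k, (x k - x m)) *
          ∑ j, (∏ m ∈ univ.erase j, (y j - y m))⁻¹ * (x i - y j)⁻¹ *
            ∏ m ∈ univ.erase k, (y j - x m) := by
        simp only [mul_apply, cauchy, cauchyInv, of_apply, mul_sum]
        exact sum_congr rfl fun j _ => by ring
    _ = (∏ m, (x k - y m)) / (∏ m ∈ univ.erase k, (x k - x m)) *
          ((∏ m ∈ univ.erase k, (x i - x m)) / ∏ m, (x i - y m)) := by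
        rw [hbary, mul_div_cancel_left₀ _ hxi]
    _ = (1 : Matrix ι ι K) i k := by
        rcases eq_or_ne i k with rfl | hik
        · rw [one_apply_eq]; field_simp
        · rw [one_apply_ne hik,
            prod_eq_zero (f := fun m => x i - x m) (mem_erase.mpr ⟨hik, mem_univ i⟩) (sub_self _)]
          simp

theorem inv_of_inv_one_add_mul_apply {a b : ι → K} (ha : Function.Injective a)
    (hb : Function.Injective b) (hb0 : ∀ j, b j ≠ 0) (hab : ∀ i j, 1 + a i * b j ≠ 0)
    (j k : ι) :
    (of fun i j => (1 + a i * b j)⁻¹)⁻¹ j k =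
      (∏ m, (1 + a k * b m)) * (∏ m ∈ univ.erase k, (1 + a m * b j)) /
        ((∏ m ∈ univ.erase k, (a k - a m)) * ∏ m ∈ univ.erase j, (b m - b j)) := by
  -- `1 + a i * b j = b j * (a i - y j)`: a column-scaled Cauchy matrix
  set y : ι → K := fun j => -(b j)⁻¹
  have hy : Function.Injective y := fun i j h => hb (inv_injective (neg_injective h))
  have hay : ∀ i j, a i - y j = (1 + a i * b j) / b j := fun i j => by
    simp only [y]; field_simp [hb0 j]; ring
  have hya : ∀ m, y j - a m = -((1 + a m * b j) / b j) := fun m => by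
    simp only [y]; field_simp [hb0 j]; ring
  have hyy : ∀ m, y j - y m = -((b m - b j) / (b j * b m)) := fun m => by
    simp only [y]; field_simp [hb0 j, hb0 m]; ring
  have hcard : ∀ l : ι, #(univ.erase l) = Fintype.card ι - 1 := fun l => by
    rw [card_erase_of_mem (mem_univ l), card_univ]
  have hM : (of fun i j => (1 + a i * b j)⁻¹) = cauchy a y * diagonal b⁻¹ := by
    ext i j
    simp only [of_apply, cauchy, mul_diagonal, hay, Pi.inv_apply, inv_div]
    field_simp [hb0 j]
  have hinv : (of fun i j => (1 + a i * b j)⁻¹)⁻¹ = diagonal b * cauchyInv a y := by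
    refine inv_eq_right_inv ?_
    rw [hM, mul_assoc, ← mul_assoc (diagonal _), diagonal_mul_diagonal]
    simp only [Pi.inv_apply, inv_mul_cancel₀ (hb0 _), diagonal_one, one_mul]
    exact cauchy_mul_cauchyInv ha hy fun i j =>
      sub_ne_zero.mp (by rw [hay]; exact div_ne_zero (hab i j) (hb0 j))
  have hbj : ∏ m, b m = b j * ∏ m ∈ univ.erase j, b m := (mul_prod_erase _ _ (mem_univ j)).symm
  rw [hinv, diagonal_mul, cauchyInv, of_apply, prod_congr rfl fun m _ => hay k m,
    prod_congr rfl fun m _ => hya m, prod_congr rfl fun m _ => hyy m, prod_neg, prod_neg,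
    prod_div_distrib, prod_div_distrib, prod_div_distrib, prod_mul_distrib, prod_const,
    prod_const, hcard, hcard, hbj]
  have := prod_erase_sub_ne_zero_iff_injective.mpr ha k
  have : ∏ m ∈ univ.erase j, (b m - b j) ≠ 0 :=
    prod_ne_zero_iff.mpr fun m hm => sub_ne_zero.mpr fun h => ne_of_mem_erase hm (hb h)
  have : ∏ m ∈ univ.erase j, b m ≠ 0 := prod_ne_zero_iff.mpr fun m _ => hb0 m
  have := hb0 j
  field_simp

theorem inv_of_inv_one_add_mul_apply_ne_zero {a b : ι → K} (ha : Function.Injective a)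
    (hb : Function.Injective b) (hb0 : ∀ j, b j ≠ 0) (hab : ∀ i j, 1 + a i * b j ≠ 0)
    (j k : ι) : (of fun i j => (1 + a i * b j)⁻¹)⁻¹ j k ≠ 0 := by
  rw [inv_of_inv_one_add_mul_apply ha hb hb0 hab]
  simp only [ne_eq, div_eq_zero_iff, mul_eq_zero, prod_eq_zero_iff, sub_eq_zero, mem_erase,
    mem_univ, and_true, not_or, not_exists, not_and]
  exact ⟨⟨fun m _ => hab k m, fun m _ => hab m j⟩, fun m hm h => hm (ha h).symm,
    fun m hm h => hm (hb h)⟩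

theorem abs_inv_of_inv_one_add_mul_apply_le {a b : ι → ℝ} {c c' : ℝ} (ha0 : ∀ i, 0 ≤ a i)
    (ha1 : ∀ i, a i ≤ 1) (hb0 : ∀ j, 0 < b j) (hb1 : ∀ j, b j ≤ 1) (hc : 0 < c) (hc' : 0 < c')
    (ha : ∀ k, c ≤ ∏ m ∈ univ.erase k, |a k - a m|)
    (hb : ∀ j, c' ≤ ∏ m ∈ univ.erase j, |b j - b m|) (j k : ι) :
    |(of fun i j => (1 + a i * b j)⁻¹)⁻¹ j k| ≤ 2 ^ (2 * Fintype.card ι - 1) / (c * c') := by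
  have hab : ∀ i j, 0 < 1 + a i * b j := fun i j => by nlinarith [ha0 i, hb0 j]
  have hab2 : ∀ i j, |1 + a i * b j| ≤ 2 := fun i j => by
    rw [abs_of_pos (hab i j)]; nlinarith [ha0 i, ha1 i, hb0 j, hb1 j]
  have hcard : Fintype.card ι + (Fintype.card ι - 1) = 2 * Fintype.card ι - 1 := by
    have := Fintype.card_pos_iff.mpr ⟨j⟩; omega
  rw [inv_of_inv_one_add_mul_apply (injective_of_le_prod_erase_abs_sub hc ha)
    (injective_of_le_prod_erase_abs_sub hc' hb) (fun j => (hb0 j).ne') (fun i j => (hab i j).ne'),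
    abs_div, abs_mul, abs_mul, abs_prod, abs_prod, abs_prod, abs_prod, ← hcard, pow_add]
  refine div_le_div₀ (by positivity) (mul_le_mul ?_ ?_ (by positivity) (by positivity))
    (mul_pos hc hc') (mul_le_mul (ha k) ?_ hc'.le (hc.trans_le (ha k)).le)
  · calc ∏ m, |1 + a k * b m| ≤ ∏ _m : ι, (2 : ℝ) :=
          prod_le_prod (fun _ _ => abs_nonneg _) fun m _ => hab2 k m
      _ = 2 ^ Fintype.card ι := by rw [prod_const, card_univ]
  · calc ∏ m ∈ univ.erase k, |1 + a m * b j| ≤ ∏ _m ∈ univ.erase k, (2 : ℝ) :=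
          prod_le_prod (fun _ _ => abs_nonneg _) fun m _ => hab2 m j
      _ = 2 ^ (Fintype.card ι - 1) := by
        rw [prod_const, card_erase_of_mem (mem_univ k), card_univ]
  · simpa only [abs_sub_comm] using hb j

theorem abs_det_div_det_submatrix_succAbove {K : Type*} [Field K] [LinearOrder K]
    [IsStrictOrderedRing K] {n : ℕ} (A : Matrix (Fin (n + 1)) (Fin (n + 1)) K)
    (s t : Fin (n + 1)) :
    |A.det / (A.submatrix s.succAbove t.succAbove).det| = |A⁻¹ t s|⁻¹ := by
  rw [inv_def, smul_apply, smul_eq_mul, Ring.inverse_eq_inv', adjugate_fin_succ_eq_det_submatrix,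
    abs_mul, abs_mul, abs_pow, abs_neg, abs_one, one_pow, one_mul, abs_inv, abs_div,
    mul_inv, inv_inv, div_eq_mul_inv]

theorem norm_mulVec_le_of_abs_le {m n : Type*} [Fintype m] [Fintype n]
    {A : Matrix m n ℝ} {C : ℝ} (hC : 0 ≤ C) (hA : ∀ i j, |A i j| ≤ C) (b : n → ℝ) :
    ‖A *ᵥ b‖ ≤ Fintype.card n * C * ‖b‖ := by
  refine (pi_norm_le_iff_of_nonneg (by positivity)).mpr fun i => ?_
  calc ‖(A *ᵥ b) i‖ ≤ ∑ j, |A i j| * ‖b j‖ := by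
        simp only [mulVec, dotProduct, Real.norm_eq_abs, ← abs_mul]
        exact abs_sum_le_sum_abs _ _
    _ ≤ ∑ _j : n, C * ‖b‖ :=
        sum_le_sum fun j _ => mul_le_mul (hA i j) (norm_le_pi_norm b j) (norm_nonneg _) hC
    _ = Fintype.card n * C * ‖b‖ := by rw [sum_const, card_univ, nsmul_eq_mul, mul_assoc]

end Matrix

theorem Real.abs_sub_rpow_le_abs_rpow_sub_rpow {x y p : ℝ} (hx : 0 ≤ x) (hy : 0 ≤ y)
    (hp : 1 ≤ p) : |x - y| ^ p ≤ |x ^ p - y ^ p| := by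
  wlog hxy : y ≤ x generalizing x y
  · rw [abs_sub_comm, abs_sub_comm (x ^ p)]
    exact this hy hx (le_of_not_ge hxy)
  have := add_rpow_le_rpow_add (sub_nonneg.mpr hxy) hy hp
  rw [sub_add_cancel] at this
  have := Real.rpow_nonneg (sub_nonneg.mpr hxy) p
  rw [abs_of_nonneg (sub_nonneg.mpr hxy), abs_of_nonneg (by linarith)]
  linarith

theorem Nat.prod_range_erase_abs_sub_eq_factorial_mul_factorial {k n : ℕ} (hk : k ≤ n) :
    ∏ m ∈ (range (n + 1)).erase k, |(m : ℝ) - k| = (k ! * (n - k)! : ℕ) := by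
  induction n, hk using Nat.le_induction with
  | base =>
    rw [range_add_one, erase_insert notMem_range_self, Nat.sub_self, factorial_zero, mul_one,
      ← descFactorial_self, descFactorial_eq_prod_range, Nat.cast_prod]
    refine prod_congr rfl fun m hm => ?_
    have := mem_range.mp hm
    rw [abs_sub_comm, abs_of_nonneg (by simp only [sub_nonneg, Nat.cast_le]; omega)]
    exact (Nat.cast_sub this.le).symm
  | succ n hkn ih =>
    rw [range_add_one, erase_insert_of_ne (by omega), prod_insert (by simp), ih,
      show n + 1 - k = (n - k) + 1 by omega, factorial_succ]
    rw [abs_of_nonneg (by simp only [sub_nonneg, Nat.cast_le]; omega)]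
    push_cast [hkn]
    ring

theorem Fin.prod_erase_abs_sub_eq_factorial_mul_factorial {n : ℕ} (k : Fin (n + 1)) :
    ∏ m ∈ univ.erase k, |((m : ℕ) : ℝ) - (k : ℕ)| = ((k : ℕ)! * (n - k)! : ℕ) := by
  rw [← Nat.prod_range_erase_abs_sub_eq_factorial_mul_factorial (Nat.lt_succ_iff.mp k.isLt),
    ← Nat.Iio_eq_range, ← Fin.map_valEmbedding_univ, show (k : ℕ) = valEmbedding k from rfl,
    ← map_erase, prod_map]
  rfl

theorem Nat.add_one_pow_le_mul_factorial_mul_factorial {k n : ℕ} (hk : k ≤ n) :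
    ((n : ℝ) + 1) ^ n ≤ (3 * Real.exp 1) ^ (n + 1) * (k ! * (n - k)! : ℕ) := by
  have hexp : ((n : ℝ) + 1) ^ n ≤ n ! * Real.exp 1 ^ (n + 1) := by
    have := Real.pow_div_factorial_le_exp (x := (n : ℝ) + 1) (by positivity) n
    rw [div_le_iff₀ (by positivity)] at this
    exact this.trans_eq (by rw [Real.exp_one_pow]; push_cast; ring)
  have hchoose : (n ! : ℝ) ≤ 2 ^ n * (k ! * (n - k)! : ℕ) := by
    rw [← choose_mul_factorial_mul_factorial hk, mul_assoc]
    exact_mod_cast Nat.mul_le_mul_right _ (choose_le_two_pow n k)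
  have hpow : (2 : ℝ) ^ n ≤ 3 ^ (n + 1) :=
    (pow_le_pow_left₀ (by norm_num) (by norm_num) n).trans
      (pow_le_pow_right₀ (by norm_num) n.le_succ)
  calc ((n : ℝ) + 1) ^ n ≤ n ! * Real.exp 1 ^ (n + 1) := hexp
    _ ≤ 2 ^ n * (k ! * (n - k)! : ℕ) * Real.exp 1 ^ (n + 1) := by gcongr
    _ ≤ 3 ^ (n + 1) * (k ! * (n - k)! : ℕ) * Real.exp 1 ^ (n + 1) := by gcongr
    _ = (3 * Real.exp 1) ^ (n + 1) * (k ! * (n - k)! : ℕ) := by ring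

theorem inv_rpow_le_prod_erase_abs_rpow_sub {n : ℕ} {ρ : ℝ} (hρ : 1 ≤ ρ) (k : Fin (n + 1)) :
    ((3 * Real.exp 1) ^ (ρ * (n + 1)))⁻¹ ≤
      ∏ m ∈ univ.erase k,
        |(((k : ℕ) + 1) / (n + 1) : ℝ) ^ ρ - (((m : ℕ) + 1) / (n + 1) : ℝ) ^ ρ| := by
  have hn : (0 : ℝ) < n + 1 := by positivity
  have hgap : ∀ m : Fin (n + 1),
      |(((k : ℕ) + 1) / (n + 1) : ℝ) - ((m : ℕ) + 1) / (n + 1)| =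
        |((m : ℕ) : ℝ) - (k : ℕ)| / (n + 1) :=
    fun m => by rw [← sub_div, abs_div, abs_of_pos hn, abs_sub_comm]; ring_nf
  have hprod : ∏ m ∈ univ.erase k, |(((k : ℕ) + 1) / (n + 1) : ℝ) - ((m : ℕ) + 1) / (n + 1)| =
      ((k : ℕ)! * (n - k)! : ℕ) / ((n : ℝ) + 1) ^ n := by
    rw [prod_congr rfl fun m _ => hgap m, prod_div_distrib, prod_const,
      Fin.prod_erase_abs_sub_eq_factorial_mul_factorial, card_erase_of_mem (mem_univ k),
      card_univ, Fintype.card_fin, Nat.add_sub_cancel]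
  calc ((3 * Real.exp 1) ^ (ρ * (n + 1)))⁻¹ = (((3 * Real.exp 1) ^ (n + 1))⁻¹) ^ ρ := by
        rw [Real.inv_rpow (by positivity), ← Real.rpow_natCast, ← Real.rpow_mul (by positivity)]
        push_cast; ring_nf
    _ ≤ (((k : ℕ)! * (n - k)! : ℕ) / ((n : ℝ) + 1) ^ n) ^ ρ := by
        refine Real.rpow_le_rpow (by positivity) ?_ (by linarith)
        rw [inv_le_iff_one_le_mul₀ (by positivity), div_mul_eq_mul_div, one_le_div (by positivity),
          mul_comm]
        exact Nat.add_one_pow_le_mul_factorial_mul_factorial (Nat.lt_succ_iff.mp k.isLt)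
    _ = ∏ m ∈ univ.erase k, |(((k : ℕ) + 1) / (n + 1) : ℝ) - ((m : ℕ) + 1) / (n + 1)| ^ ρ := by
        rw [← hprod, Real.finsetProd_rpow _ _ fun _ _ => abs_nonneg _]
    _ ≤ _ := prod_le_prod (fun _ _ => by positivity) fun m _ =>
        Real.abs_sub_rpow_le_abs_rpow_sub_rpow (by positivity) (by positivity) hρ

theorem add_one_mul_two_pow_le (n : ℕ) :
    ((n : ℝ) + 1) * 2 ^ (2 * (n + 1) - 1) ≤ (49 / 9) ^ (n + 1) := by
  induction n with
  | zero => norm_num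
  | succ n ih =>
    rcases lt_or_ge n 2 with hn | hn
    · interval_cases n <;> norm_num
    · have hn' : (4 : ℝ) * (n + 1 + 1) ≤ 49 / 9 * (n + 1) := by
        have : (2 : ℝ) ≤ n := by exact_mod_cast hn
        linarith
      calc ((n + 1 : ℕ) + 1 : ℝ) * 2 ^ (2 * (n + 1 + 1) - 1)
          = 4 * (n + 1 + 1) * 2 ^ (2 * (n + 1) - 1) := by
            rw [show 2 * (n + 1 + 1) - 1 = 2 * (n + 1) - 1 + 2 by omega, pow_add]; push_cast; ring
        _ ≤ 49 / 9 * ((n + 1) * 2 ^ (2 * (n + 1) - 1)) := by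
            rw [← mul_assoc]; gcongr
        _ ≤ (49 / 9) ^ (n + 1 + 1) := by rw [pow_succ' _ (n + 1)]; gcongr

theorem add_one_mul_two_pow_mul_rpow_le (n : ℕ) {ρ : ℝ} (hρ : 1 ≤ ρ) :
    ((n : ℝ) + 1) * (2 ^ (2 * (n + 1) - 1) * (3 * Real.exp 1) ^ (2 * ρ * ((n : ℝ) + 1))) ≤
      (7 * Real.exp 1) ^ (2 * ρ * ((n : ℝ) + 1)) := by
  have h73 : (49 / 9 : ℝ) ^ (n + 1) ≤ (7 / 3) ^ (2 * ρ * ((n : ℝ) + 1)) := by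
    rw [show (49 / 9 : ℝ) = (7 / 3) ^ (2 : ℝ) by norm_num, ← Real.rpow_mul_natCast (by norm_num)]
    exact Real.rpow_le_rpow_of_exponent_le (by norm_num) (by push_cast; nlinarith)
  rw [show (7 * Real.exp 1) = 7 / 3 * (3 * Real.exp 1) by ring,
    Real.mul_rpow (x := 7 / 3) (by norm_num) (by positivity), ← mul_assoc]
  exact mul_le_mul_of_nonneg_right ((add_one_mul_two_pow_le n).trans h73) (by positivity)

theorem tstudent_counting_matrix_tau_bound_general (n : ℕ) (ρ : ℝ) (hρ : 1 ≤ ρ)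
    (M : Matrix (Fin (n + 1)) (Fin (n + 1)) ℝ)
    (hM : ∀ i j : Fin (n + 1), M i j =
      1 / (1 + ((((i : ℕ) + 1 : ℝ) / (n + 1)) * (((j : ℕ) + 1 : ℝ) / (n + 1))) ^ ρ)) :
    (∀ s t : Fin (n + 1),
      ((2 : ℝ) ^ (2 * (n + 1) - 1))⁻¹ * ((3 * Real.exp 1) ^ (2 * ρ * ((n : ℝ) + 1)))⁻¹ ≤
        |M.det / (M.submatrix s.succAbove t.succAbove).det|) ∧
    ∀ b : Fin (n + 1) → ℝ,
      ‖M⁻¹.mulVec b‖ ≤ (7 * Real.exp 1) ^ (2 * ρ * ((n : ℝ) + 1)) * ‖b‖ := by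
  set a : Fin (n + 1) → ℝ := fun i => (((i : ℕ) + 1 : ℝ) / (n + 1)) ^ ρ
  have hMa : M = Matrix.of fun i j => (1 + a i * a j)⁻¹ := by
    ext i j
    rw [hM, Matrix.of_apply, Real.mul_rpow (by positivity) (by positivity), one_div]
  have ha0 : ∀ i, 0 < a i := fun i => by positivity
  have ha1 : ∀ i, a i ≤ 1 := fun i => Real.rpow_le_one (by positivity)
    (div_le_one_of_le₀ (by norm_cast; omega) (by positivity)) (by linarith)
  have hc : 0 < ((3 * Real.exp 1) ^ (ρ * (n + 1)))⁻¹ := by positivity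
  have hgap := inv_rpow_le_prod_erase_abs_rpow_sub (n := n) hρ
  have ha : Function.Injective a := injective_of_le_prod_erase_abs_sub hc hgap
  have hbound : ∀ j k,
      |M⁻¹ j k| ≤ 2 ^ (2 * (n + 1) - 1) * (3 * Real.exp 1) ^ (2 * ρ * (n + 1)) := fun j k => by
    refine (hMa ▸ Matrix.abs_inv_of_inv_one_add_mul_apply_le (fun i => (ha0 i).le) ha1 ha0 ha1
      hc hc hgap hgap j k).trans_eq ?_
    rw [Fintype.card_fin, div_eq_mul_inv, ← mul_inv, inv_inv, ← Real.rpow_add (by positivity)]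
    ring_nf
  have hne : ∀ j k, M⁻¹ j k ≠ 0 := fun j k => hMa ▸ Matrix.inv_of_inv_one_add_mul_apply_ne_zero
    ha ha (fun i => (ha0 i).ne') (fun i j => (add_pos one_pos (mul_pos (ha0 i) (ha0 j))).ne') j k
  refine ⟨fun s t => ?_, fun b => ?_⟩
  · rw [Matrix.abs_det_div_det_submatrix_succAbove, ← mul_inv]
    exact inv_anti₀ (abs_pos.mpr (hne t s)) (hbound t s)
  · refine (Matrix.norm_mulVec_le_of_abs_le (by positivity) hbound b).trans ?_
    rw [Fintype.card_fin, Nat.cast_add_one]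
    exact mul_le_mul_of_nonneg_right (add_one_mul_two_pow_mul_rpow_le n hρ) (norm_nonneg b)

theorem tstudent_counting_matrix_tau_bound (n : ℕ) (hn : 1 ≤ n) (ρ : ℝ) (hρ : 1 ≤ ρ)
    (M : Matrix (Fin (n + 1)) (Fin (n + 1)) ℝ)
    (hM : ∀ i j : Fin (n + 1), M i j =
      1 / (1 + ((((i : ℕ) + 1 : ℝ) / (n + 1)) * (((j : ℕ) + 1 : ℝ) / (n + 1))) ^ ρ)) :
    (∀ s t : Fin (n + 1),
      ((2 : ℝ) ^ (2 * (n + 1) - 1))⁻¹ * ((3 * Real.exp 1) ^ (2 * ρ * ((n : ℝ) + 1)))⁻¹ ≤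
        |M.det / (M.submatrix s.succAbove t.succAbove).det|) ∧
    ∀ b : Fin (n + 1) → ℝ,
      ‖M⁻¹.mulVec b‖ ≤ (7 * Real.exp 1) ^ (2 * ρ * ((n : ℝ) + 1)) * ‖b‖ :=
  tstudent_counting_matrix_tau_bound_general n ρ hρ M hM
end
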